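/- arXiv:1210.0258 — 7 statements merged into one kernel-verified Lean document; each statement's English description precedes it below -/
import Mathlib

section
/- Let f, g : [0, ∞) → [0, ∞) be Lebesgue measurable and locally integrable (integrable on every compact interval), and let N ≥ 0, T > 0, ζ > 0, C ≥ 0 be constants such that f(t + T) ≤ f(t) − ζ g(t) + C for every t ≥ N. Then limsup_{t→∞} (1/t) ∫₀ᵗ g(s) ds ≤ C/ζ. -/
/-!
Integrating the drift inequality over `[N, x]` telescopes the `f`-terms into two windows of
length `T`: `ζ ∫_N^x g ≤ ∫_N^{N+T} f - ∫_x^{x+T} f + C (x - N)`, and the last window is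
nonnegative. Hence `∫_0^x g ≤ K + (C/ζ) x` for a constant `K`, and dividing by `x` gives the
bound.
-/

open MeasureTheory Filter Set

theorem intervalIntegrable_of_forall_integrableOn_Icc {f : ℝ → ℝ} {N a b : ℝ}
    (hf : ∀ b, IntegrableOn f (Icc N b)) (ha : N ≤ a) (hb : N ≤ b) :
    IntervalIntegrable f volume a b :=
  ((hf (max a b)).mono_set
    (uIcc_subset_Icc ⟨ha, le_max_left a b⟩ ⟨hb, le_max_right a b⟩)).intervalIntegrable

theorem intervalIntegral.integral_sub_comp_add_right {f : ℝ → ℝ} {a b T : ℝ}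
    (hab : IntervalIntegrable f volume a b)
    (hshift : IntervalIntegrable f volume (a + T) (b + T))
    (hwindow : IntervalIntegrable f volume a (a + T)) :
    ∫ s in a..b, (f s - f (s + T)) = (∫ s in a..a + T, f s) - ∫ s in b..b + T, f s := by
  have hcomp : IntervalIntegrable (fun s => f (s + T)) volume a b := by
    simpa using hshift.comp_add_right T
  rw [intervalIntegral.integral_sub hab hcomp, intervalIntegral.integral_comp_add_right,
    intervalIntegral.integral_interval_sub_interval_comm hab hshift hwindow]

theorem integral_le_of_drift {f g : ℝ → ℝ} {N T ζ C x : ℝ}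
    (hf_nonneg : ∀ t, N ≤ t → 0 ≤ f t)
    (hf : ∀ b, IntegrableOn f (Icc N b)) (hg : ∀ b, IntegrableOn g (Icc N b))
    (hT : 0 < T) (hdrift : ∀ t, N ≤ t → f (t + T) ≤ f t - ζ * g t + C) (hx : N ≤ x) :
    ζ * ∫ s in N..x, g s ≤ (∫ s in N..N + T, f s) + C * (x - N) := by
  have hfi {a b : ℝ} (ha : N ≤ a) (hb : N ≤ b) : IntervalIntegrable f volume a b :=
    intervalIntegrable_of_forall_integrableOn_Icc hf ha hb
  have hdiff : IntervalIntegrable (fun s => f s - f (s + T)) volume N x :=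
    (hfi le_rfl hx).sub <| by
      simpa using (hfi (a := N + T) (b := x + T) (by linarith) (by linarith)).comp_add_right T
  have htail : 0 ≤ ∫ s in x..x + T, f s :=
    intervalIntegral.integral_nonneg (by linarith) fun s hs => hf_nonneg s (hx.trans hs.1)
  calc ζ * ∫ s in N..x, g s = ∫ s in N..x, ζ * g s :=
        (intervalIntegral.integral_const_mul _ _).symm
    _ ≤ ∫ s in N..x, ((f s - f (s + T)) + C) := by
        refine intervalIntegral.integral_mono_on hx
          ((intervalIntegrable_of_forall_integrableOn_Icc hg le_rfl hx).const_mul ζ)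
          (hdiff.add intervalIntegrable_const) fun s hs => ?_
        linarith [hdrift s hs.1]
    _ = (∫ s in N..N + T, f s) - (∫ s in x..x + T, f s) + C * (x - N) := by
        rw [intervalIntegral.integral_add hdiff intervalIntegrable_const,
          intervalIntegral.integral_sub_comp_add_right (hfi le_rfl hx)
            (hfi (by linarith) (by linarith)) (hfi le_rfl (by linarith)),
          intervalIntegral.integral_const, smul_eq_mul, mul_comm]
    _ ≤ (∫ s in N..N + T, f s) + C * (x - N) := by linarith

theorem limsup_le_of_eventually_le_add_div {u : ℝ → ℝ} {c K : ℝ}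
    (hu : IsCoboundedUnder (· ≤ ·) atTop u) (h : ∀ᶠ x in atTop, u x ≤ c + K / x) :
    limsup u atTop ≤ c := by
  have hlim : Tendsto (fun x : ℝ => c + K / x) atTop (nhds c) := by
    simpa using tendsto_const_nhds.add (tendsto_const_nhds.div_atTop (tendsto_id (α := ℝ)))
  exact (limsup_le_limsup h hu hlim.isBoundedUnder_le).trans hlim.limsup_eq.le

theorem limsup_average_le_of_integral_le {g : ℝ → ℝ} {c K : ℝ}
    (hg_nonneg : ∀ t, 0 ≤ t → 0 ≤ g t)
    (h : ∀ᶠ x in atTop, ∫ s in (0:ℝ)..x, g s ≤ K + c * x) :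
    limsup (fun t : ℝ => (1 / t) * ∫ s in (0:ℝ)..t, g s) atTop ≤ c := by
  refine limsup_le_of_eventually_le_add_div (K := K)
    (isCoboundedUnder_le_of_eventually_le atTop (x := 0) ?_) ?_
  · filter_upwards [eventually_ge_atTop 0] with x hx
    exact mul_nonneg (by positivity)
      (intervalIntegral.integral_nonneg hx fun s hs => hg_nonneg s hs.1)
  · filter_upwards [h, eventually_gt_atTop 0] with x hx hx0
    calc (1 / x) * ∫ s in (0:ℝ)..x, g s ≤ (1 / x) * (K + c * x) := by gcongr
      _ = c + K / x := by field_simp; ring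

theorem deterministic_time_average_bound_general
    (f g : ℝ → ℝ)
    (hf_nonneg : ∀ t, 0 ≤ t → 0 ≤ f t) (hg_nonneg : ∀ t, 0 ≤ t → 0 ≤ g t)
    (hf_loc : ∀ a : ℝ, IntegrableOn f (Set.Icc 0 a))
    (hg_loc : ∀ a : ℝ, IntegrableOn g (Set.Icc 0 a))
    (N T ζ C : ℝ) (hT : 0 < T) (hζ : 0 < ζ)
    (hdrift : ∀ t, N ≤ t → f (t + T) ≤ f t - ζ * g t + C) :
    limsup (fun t : ℝ => (1 / t) * ∫ s in (0:ℝ)..t, g s) atTop ≤ C / ζ := by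
  set M := max N 0
  have hM : 0 ≤ M := le_max_right N 0
  have loc {φ : ℝ → ℝ} (hφ : ∀ a, IntegrableOn φ (Icc 0 a)) (b : ℝ) :
      IntegrableOn φ (Icc M b) :=
    (hφ b).mono_set (Icc_subset_Icc_left hM)
  refine limsup_average_le_of_integral_le hg_nonneg
    (K := (∫ s in (0:ℝ)..M, g s) + ((∫ s in M..M + T, f s) - C * M) / ζ) ?_
  filter_upwards [eventually_ge_atTop M] with x hx
  have hdrift_int := integral_le_of_drift (fun t ht => hf_nonneg t (hM.trans ht))
    (loc hf_loc) (loc hg_loc) hT (fun t ht => hdrift t ((le_max_left N 0).trans ht)) hx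
  have hgMx : ∫ s in M..x, g s ≤ ((∫ s in M..M + T, f s) - C * M) / ζ + C / ζ * x := by
    rw [div_add' _ _ _ hζ.ne', le_div_iff₀' hζ]
    have hCx : C / ζ * x * ζ = C * x := by field_simp
    linarith
  rw [← intervalIntegral.integral_add_adjacent_intervals
    (intervalIntegrable_of_forall_integrableOn_Icc hg_loc le_rfl hM)
    (intervalIntegrable_of_forall_integrableOn_Icc hg_loc hM (hM.trans hx))]
  linarith

/-- Deterministic time-average bound: if `f (t + T) ≤ f t - ζ g t + C` for `t ≥ N`,
then `limsup (1/t) ∫₀ᵗ g ≤ C / ζ`. -/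
theorem deterministic_time_average_bound
    (f g : ℝ → ℝ)
    (hf_meas : Measurable f) (hg_meas : Measurable g)
    (hf_nonneg : ∀ t, 0 ≤ t → 0 ≤ f t) (hg_nonneg : ∀ t, 0 ≤ t → 0 ≤ g t)
    (hf_loc : ∀ a : ℝ, IntegrableOn f (Set.Icc 0 a))
    (hg_loc : ∀ a : ℝ, IntegrableOn g (Set.Icc 0 a))
    (N T ζ C : ℝ) (hN : 0 ≤ N) (hT : 0 < T) (hζ : 0 < ζ) (hC : 0 ≤ C)
    (hdrift : ∀ t, N ≤ t → f (t + T) ≤ f t - ζ * g t + C) :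
    limsup (fun t : ℝ => (1 / t) * ∫ s in (0:ℝ)..t, g s) atTop ≤ C / ζ :=
  deterministic_time_average_bound_general f g hf_nonneg hg_nonneg hf_loc hg_loc N T ζ C hT hζ
    hdrift
end

section
/- Let J ≥ 1 be an integer and let B > 0, β_min > 0 and T ≥ 2JB/β_min be real constants. Let v₁, …, v_J be nonnegative reals with ∑_{j=1}^{J} v_j ≥ 2JB, let β₁, …, β_J be reals with β_j ≥ β_min for every j, and let a₁, …, a_J be reals such that for each j: a_j ≤ v_j − β_j T whenever v_j > β_j T, and a_j ≤ B whenever v_j ≤ β_j T. Then ∑_{j=1}^{J} a_j ≤ ∑_{j=1}^{J} v_j − JB. -/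
/-!
If some job outlasts the horizon, `v j₀ > β j₀ * T`, its decrease `β j₀ * T ≥ βmin * T ≥ 2JB`
pays for an increase of at most `B` in every coordinate; otherwise every `a j ≤ B`, and
`∑ a ≤ JB ≤ ∑ v - JB` because `∑ v ≥ 2JB`.
-/

open Finset

theorem Finset.sum_le_sum_sub_of_forall_le_of_le_sub {ι M : Type*} [AddCommGroup M] [PartialOrder M]
    [IsOrderedAddMonoid M] {s : Finset ι} {f g : ι → M} {i : ι} {d : M}
    (hle : ∀ j ∈ s, f j ≤ g j) (hi : i ∈ s) (hfi : f i ≤ g i - d) :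
    ∑ j ∈ s, f j ≤ ∑ j ∈ s, g j - d := by
  classical
  rw [← add_sum_erase s f hi, ← add_sum_erase s g hi]
  calc f i + ∑ j ∈ s.erase i, f j ≤ (g i - d) + ∑ j ∈ s.erase i, g j :=
        add_le_add hfi (sum_le_sum fun j hj => hle j (mem_of_mem_erase hj))
    _ = g i + ∑ j ∈ s.erase i, g j - d := by abel

theorem high_counter_case_analysis_general
    (J : ℕ) (B βmin T : ℝ)
    (hB : 0 < B) (hβmin : 0 < βmin) (hT : 2 * J * B / βmin ≤ T)
    (v β a : Fin J → ℝ)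
    (hv : ∀ j, 0 ≤ v j) (hsum : 2 * J * B ≤ ∑ j, v j)
    (hβj : ∀ j, βmin ≤ β j)
    (ha1 : ∀ j, β j * T < v j → a j ≤ v j - β j * T)
    (ha2 : ∀ j, v j ≤ β j * T → a j ≤ B) :
    ∑ j, a j ≤ (∑ j, v j) - J * B := by
  have hJB : 0 ≤ 2 * J * B := by positivity
  have hT0 : 0 ≤ T := (div_nonneg hJB hβmin.le).trans hT
  have hdrain (j : Fin J) : 2 * J * B ≤ β j * T :=
    calc 2 * J * B ≤ βmin * T := (div_le_iff₀' hβmin).1 hT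
      _ ≤ β j * T := mul_le_mul_of_nonneg_right (hβj j) hT0
  have hsumB : ∑ _j : Fin J, B = J * B := by simp
  by_cases hlong : ∃ j₀, β j₀ * T < v j₀
  · obtain ⟨j₀, hj₀⟩ := hlong
    have hle (j : Fin J) : a j ≤ v j + B := by
      rcases le_or_gt (v j) (β j * T) with h | h
      · linarith [ha2 j h, hv j]
      · linarith [ha1 j h, hdrain j]
    have hj₀ : a j₀ ≤ v j₀ + B - (2 * J * B + B) := by linarith [ha1 j₀ hj₀, hdrain j₀]
    have hsum_le := sum_le_sum_sub_of_forall_le_of_le_sub (fun j _ => hle j) (mem_univ j₀) hj₀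
    rw [sum_add_distrib, hsumB] at hsum_le
    linarith
  · push Not at hlong
    calc ∑ j, a j ≤ ∑ _j : Fin J, B := sum_le_sum fun j _ => ha2 j (hlong j)
      _ = J * B := hsumB
      _ ≤ (∑ j, v j) - J * B := by linarith

/-- Deterministic case-analysis lemma for the high-counter drift:
if `∑ v ≥ 2JB`, `β_j ≥ β_min`, `T ≥ 2JB/β_min`, and each `a_j` satisfies
`a_j ≤ v_j − β_j T` when `v_j > β_j T` and `a_j ≤ B` otherwise,
then `∑ a ≤ ∑ v − JB`. -/
theorem high_counter_case_analysis
    (J : ℕ) (hJ : 1 ≤ J) (B βmin T : ℝ)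
    (hB : 0 < B) (hβmin : 0 < βmin) (hT : 2 * J * B / βmin ≤ T)
    (v β a : Fin J → ℝ)
    (hv : ∀ j, 0 ≤ v j) (hsum : 2 * J * B ≤ ∑ j, v j)
    (hβj : ∀ j, βmin ≤ β j)
    (ha1 : ∀ j, β j * T < v j → a j ≤ v j - β j * T)
    (ha2 : ∀ j, v j ≤ β j * T → a j ≤ B) :
    ∑ j, a j ≤ (∑ j, v j) - J * B :=
  high_counter_case_analysis_general J B βmin T hB hβmin hT v β a hv hsum hβj ha1 ha2
end

section
/- Consider a stochastic processing network structure satisfying Assumptions A1 and A2. Let w ∈ ℝ_{≥0}^I and let u be a scheduling vector that is maximal with respect to w. If w_i > 0 for some buffer i ∈ I^{(h)}, then for every processor k ∈ K^{(h)} there is exactly one activity j with k_j = k and u_j = 1. -/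
open Finset

theorem Finset.existsUnique_eq_one_of_sum_eq_one {ι R : Type*} [AddCommMonoidWithOne R]
    [CharZero R] {s : Finset ι} {u : ι → R} (hu : ∀ j ∈ s, u j = 0 ∨ u j = 1)
    (hs : ∑ j ∈ s, u j = 1) : ∃! j, j ∈ s ∧ u j = 1 := by
  classical
  have hcount : ∑ j ∈ s, u j = #(s.filter fun j => u j = 1) := by
    rw [← sum_boole]
    refine sum_congr rfl fun j hj => ?_
    rcases hu j hj with h0 | h1
    · simp [h0]
    · simp [h1]
  obtain ⟨a, ha⟩ := card_eq_one.mp (by exact_mod_cast hcount.symm.trans hs)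
  refine ⟨a, ?_, fun j hj => ?_⟩
  · simpa using (mem_filter.mp (ha ▸ mem_singleton_self a))
  · simpa [ha] using (mem_filter.mpr hj : j ∈ s.filter fun j => u j = 1)

theorem parallel_server_component_fully_busy_general
    {I J K H : Type*} [Fintype J]
    [DecidableEq K]
    (buf : J → I) (kOf : J → K)
    (compI : I → H) (compK : K → H)
    (hbip : ∀ i k, compI i = compK k → ∃ j, buf j = i ∧ kOf j = k)
    (w : I → ℝ)
    (u : J → ℝ) (hu01 : ∀ j, u j = 0 ∨ u j = 1)
    (hmax : ∀ j : J, w (buf j) = 0 ∨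
      ∑ ℓ ∈ Finset.univ.filter (fun ℓ => kOf ℓ = kOf j), u ℓ = 1)
    (h : H) (i : I) (hi : compI i = h) (hwi : 0 < w i) :
    ∀ k : K, compK k = h → ∃! j : J, kOf j = k ∧ u j = 1 := by
  intro k hk
  -- By A2 some activity serves buffer `i` on processor `k`; maximality makes `k` busy.
  obtain ⟨j, rfl, rfl⟩ := hbip i k (hi.trans hk.symm)
  have hbusy := (hmax j).resolve_left hwi.ne'
  simpa using existsUnique_eq_one_of_sum_eq_one (fun ℓ _ => hu01 ℓ) hbusy

/-- In a parallel server network (Assumption A1: each activity uses one processor `kOf j`)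
satisfying Assumption A2 (complete bipartite components indexed by `H`), if a scheduling
vector `u` is maximal with respect to `w` and some buffer `i` in component `h` has
`w i > 0`, then every processor `k` of component `h` is used by exactly one active
activity. -/
theorem parallel_server_component_fully_busy
    {I J K H : Type*} [Fintype I] [Fintype J] [Fintype K] [Fintype H]
    [Nonempty I] [Nonempty J] [Nonempty K]
    [DecidableEq I] [DecidableEq K] [DecidableEq H]
    (buf : J → I) (kOf : J → K) (β : J → ℝ) (hβ : ∀ j, 0 < β j)
    (compI : I → H) (compK : K → H)
    (hIsurj : Function.Surjective compI) (hKsurj : Function.Surjective compK)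
    (hcomp : ∀ j, compI (buf j) = compK (kOf j))
    (hbip : ∀ i k, compI i = compK k → ∃ j, buf j = i ∧ kOf j = k)
    (w : I → ℝ) (hw : ∀ i, 0 ≤ w i)
    (u : J → ℝ) (hu01 : ∀ j, u j = 0 ∨ u j = 1)
    (hcap : ∀ k : K, ∑ j ∈ Finset.univ.filter (fun j => kOf j = k), u j ≤ 1)
    (hmax : ∀ j : J, w (buf j) = 0 ∨
      ∑ ℓ ∈ Finset.univ.filter (fun ℓ => kOf ℓ = kOf j), u ℓ = 1)
    (h : H) (i : I) (hi : compI i = h) (hwi : 0 < w i) :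
    ∀ k : K, compK k = h → ∃! j : J, kOf j = k ∧ u j = 1 :=
  parallel_server_component_fully_busy_general buf kOf compI compK hbip w u hu01 hmax h i hi hwi
end

section
/- Consider a stochastic processing network structure satisfying Assumptions A1 and A2. Let w ∈ ℝ_{≥0}^I and let u be a scheduling vector that is maximal with respect to w. Then for every component index h, ∑_{j : i_j ∈ I^{(h)}} u_j β_j ≥ 1⁺(∑_{i ∈ I^{(h)}} w_i) · ∑_{k ∈ K^{(h)}} min{β_j : j ∈ J, k_j = k}, where 1⁺(x) = 1 if x > 0 and 1⁺(x) = 0 otherwise. -/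
/-!
If some buffer of a component holds positive work, then every processor of that component
can serve it (A2), so by maximality every such processor is busy. Under A1 the schedule
weights of a busy processor's activities sum to one, so the rate it delivers is a convex
combination of its rates and hence at least the smallest one; summing over the processors
of the component, which partition its activities, gives the bound. Otherwise the indicator
vanishes and the bound is the nonnegativity of rates.
-/

open Finset

theorem Finset.le_sum_mul_of_sum_eq_one {ι R : Type*} [CommSemiring R] [PartialOrder R]
    [IsOrderedRing R] {s : Finset ι} {u β : ι → R} {c : R}
    (hu : ∀ i ∈ s, 0 ≤ u i) (hsum : ∑ i ∈ s, u i = 1) (hc : ∀ i ∈ s, c ≤ β i) :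
    c ≤ ∑ i ∈ s, u i * β i :=
  calc c = ∑ i ∈ s, u i * c := by rw [← sum_mul, hsum, one_mul]
    _ ≤ ∑ i ∈ s, u i * β i :=
      sum_le_sum fun i hi => mul_le_mul_of_nonneg_left (hc i hi) (hu i hi)

theorem sInf_rate_le {J K : Type*} [Finite J] (kOf : J → K) (β : J → ℝ) (j : J) :
    sInf {x : ℝ | ∃ ℓ, kOf ℓ = kOf j ∧ x = β ℓ} ≤ β j :=
  csInf_le ((Set.finite_range β).subset (by rintro _ ⟨ℓ, -, rfl⟩; exact ⟨ℓ, rfl⟩)).bddBelow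
    ⟨j, rfl, rfl⟩

section ParallelServer

variable {I J K H : Type*} [Fintype J] [DecidableEq K]
  (buf : J → I) (kOf : J → K) (compI : I → H) (compK : K → H)

theorem sInf_rate_le_sum_of_busy (β : J → ℝ) (u : J → ℝ) (hu : ∀ j, 0 ≤ u j) (k : K)
    (hbusy : ∑ j ∈ univ.filter (fun j => kOf j = k), u j = 1) :
    sInf {x : ℝ | ∃ j, kOf j = k ∧ x = β j}
      ≤ ∑ j ∈ univ.filter (fun j => kOf j = k), u j * β j :=
  le_sum_mul_of_sum_eq_one (fun j _ => hu j) hbusy fun j hj => by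
    rw [← (mem_filter.mp hj).2]
    exact sInf_rate_le kOf β j

theorem processor_busy_of_workload_ne_zero
    (hbip : ∀ i k, compI i = compK k → ∃ j, buf j = i ∧ kOf j = k)
    (w : I → ℝ) (u : J → ℝ)
    (hmax : ∀ j : J, w (buf j) = 0 ∨ ∑ ℓ ∈ univ.filter (fun ℓ => kOf ℓ = kOf j), u ℓ = 1)
    {i : I} (hi : w i ≠ 0) {k : K} (hk : compI i = compK k) :
    ∑ j ∈ univ.filter (fun j => kOf j = k), u j = 1 := by
  obtain ⟨j, rfl, rfl⟩ := hbip i k hk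
  exact (hmax j).resolve_left hi

theorem sum_component_eq_sum_sum_processor [Fintype K] [DecidableEq H] {M : Type*}
    [AddCommMonoid M] (hcomp : ∀ j, compI (buf j) = compK (kOf j)) (f : J → M) (h : H) :
    ∑ j ∈ univ.filter (fun j => compI (buf j) = h), f j
      = ∑ k ∈ univ.filter (fun k => compK k = h),
          ∑ j ∈ univ.filter (fun j => kOf j = k), f j := by
  rw [sum_fiberwise_eq_sum_filter]
  simp only [mem_filter, mem_univ, true_and, hcomp]

end ParallelServer

theorem parallel_server_component_rate_lower_bound_general
    {I J K H : Type*} [Fintype I] [Fintype J] [Fintype K]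
    [DecidableEq K] [DecidableEq H]
    (buf : J → I) (kOf : J → K) (β : J → ℝ) (hβ : ∀ j, 0 < β j)
    (compI : I → H) (compK : K → H)
    (hcomp : ∀ j, compI (buf j) = compK (kOf j))
    (hbip : ∀ i k, compI i = compK k → ∃ j, buf j = i ∧ kOf j = k)
    (w : I → ℝ)
    (u : J → ℝ) (hu01 : ∀ j, u j = 0 ∨ u j = 1)
    (hmax : ∀ j : J, w (buf j) = 0 ∨
      ∑ ℓ ∈ Finset.univ.filter (fun ℓ => kOf ℓ = kOf j), u ℓ = 1) :
    ∀ h : H,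
      (if 0 < ∑ i ∈ Finset.univ.filter (fun i => compI i = h), w i then (1:ℝ) else 0) *
        ∑ k ∈ Finset.univ.filter (fun k => compK k = h),
          sInf {x : ℝ | ∃ j, kOf j = k ∧ x = β j}
      ≤ ∑ j ∈ Finset.univ.filter (fun j => compI (buf j) = h), u j * β j := by
  intro h
  have hu : ∀ j, 0 ≤ u j := fun j => (hu01 j).elim (·.ge) (· ▸ zero_le_one)
  split_ifs with hpos
  · obtain ⟨i, hi, hwi⟩ := exists_lt_of_sum_lt (f := 0) (g := w) (by simpa using hpos)
    rw [one_mul, sum_component_eq_sum_sum_processor buf kOf compI compK hcomp]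
    refine sum_le_sum fun k hk => sInf_rate_le_sum_of_busy kOf β u hu k ?_
    have hik : compI i = compK k := (mem_filter.mp hi).2.trans (mem_filter.mp hk).2.symm
    exact processor_busy_of_workload_ne_zero buf kOf compI compK hbip w u hmax hwi.ne' hik
  · rw [zero_mul]
    exact sum_nonneg fun j _ => mul_nonneg (hu j) (hβ j).le

/-- Per-component processing-rate guarantee for parallel server networks satisfying
Assumptions A1 and A2: for a schedule `u` maximal with respect to `w`,
`∑_{j : i_j ∈ I^{(h)}} u_j β_j ≥ 1⁺(∑_{i ∈ I^{(h)}} w_i) ∑_{k ∈ K^{(h)}} min{β_j : k_j = k}`. -/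
theorem parallel_server_component_rate_lower_bound
    {I J K H : Type*} [Fintype I] [Fintype J] [Fintype K] [Fintype H]
    [Nonempty I] [Nonempty J] [Nonempty K]
    [DecidableEq I] [DecidableEq K] [DecidableEq H]
    (buf : J → I) (kOf : J → K) (β : J → ℝ) (hβ : ∀ j, 0 < β j)
    (compI : I → H) (compK : K → H)
    (hIsurj : Function.Surjective compI) (hKsurj : Function.Surjective compK)
    (hcomp : ∀ j, compI (buf j) = compK (kOf j))
    (hbip : ∀ i k, compI i = compK k → ∃ j, buf j = i ∧ kOf j = k)
    (w : I → ℝ) (hw : ∀ i, 0 ≤ w i)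
    (u : J → ℝ) (hu01 : ∀ j, u j = 0 ∨ u j = 1)
    (hcap : ∀ k : K, ∑ j ∈ Finset.univ.filter (fun j => kOf j = k), u j ≤ 1)
    (hmax : ∀ j : J, w (buf j) = 0 ∨
      ∑ ℓ ∈ Finset.univ.filter (fun ℓ => kOf ℓ = kOf j), u ℓ = 1) :
    ∀ h : H,
      (if 0 < ∑ i ∈ Finset.univ.filter (fun i => compI i = h), w i then (1:ℝ) else 0) *
        ∑ k ∈ Finset.univ.filter (fun k => compK k = h),
          sInf {x : ℝ | ∃ j, kOf j = k ∧ x = β j}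
      ≤ ∑ j ∈ Finset.univ.filter (fun j => compI (buf j) = h), u j * β j :=
  parallel_server_component_rate_lower_bound_general buf kOf β hβ compI compK hcomp hbip w u hu01
    hmax
end

section
/- Consider a stochastic processing network structure satisfying Assumptions A1 and A2, and define L(x) = ∑_{h=1}^{H} (∑_{i ∈ I^{(h)}} x_i)² for x ∈ ℝ^I. Let ρ ∈ ℝ_{≥0}^I, m ∈ ℝ_{>0}^I and ε ≥ 0, and set ρ^{(h)} = ∑_{i ∈ I^{(h)}} ρ_i, m^{(h)} = ∑_{i ∈ I^{(h)}} m_i, and β̂^{(h)} = ∑_{k ∈ K^{(h)}} min{β_j : j ∈ J, k_j = k}. If ρ^{(h)} + ε m^{(h)} < β̂^{(h)} for every h, then there exist constants η > 0 and C ≥ 0 such that for every w ∈ ℝ_{≥0}^I and every scheduling vector u maximal with respect to w: L(w + ρ + εm − s(u)) ≤ L(w) − η ∑_{i ∈ I} w_i + C, where s(u) ∈ ℝ^I is given by s_i(u) = ∑_{j : i_j = i} u_j β_j. -/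
/-!
Write `W_h`, `δ_h = ρ^{(h)} + ε m^{(h)}` and `S_h` for the workload, the inflow and the service
received by component `h`. Expanding the square gives
`(W_h + δ_h - S_h)² = W_h² + 2 W_h (δ_h - S_h) + (δ_h - S_h)²`. The last term is bounded since
`|S_h| ≤ ∑_j |β_j|`. The cross term vanishes when `W_h = 0`; when `W_h > 0`, some buffer of
component `h` is nonempty, every processor of the component can serve it (A2), so maximality
makes each such processor busy and `S_h ≥ β̂^{(h)}`. Hence the cross term is at most
`-2 (β̂^{(h)} - δ_h) W_h ≤ -η W_h` with `η = min_h 2 (β̂^{(h)} - δ_h) > 0`.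
-/

open Finset Filter Topology

lemma exists_pos_le_of_forall_pos {H : Type*} [Finite H] {f : H → ℝ} (hf : ∀ h, 0 < f h) :
    ∃ η > 0, ∀ h, η ≤ f h := by
  have hsmall : ∀ᶠ η in 𝓝[>] (0 : ℝ), ∀ h, η < f h :=
    eventually_all.2 fun h => nhdsWithin_le_nhds (eventually_lt_nhds (hf h))
  obtain ⟨η, hηf, hη⟩ := (hsmall.and self_mem_nhdsWithin).exists
  exact ⟨η, hη, fun h => (hηf h).le⟩

lemma sq_add_sub_le {W δ S b B η : ℝ} (hW : 0 ≤ W) (hSB : |S| ≤ B)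
    (hbS : 0 < W → b ≤ S) (hη : η ≤ 2 * (b - δ)) :
    (W + δ - S) ^ 2 ≤ W ^ 2 - η * W + (|δ| + B) ^ 2 := by
  have hcross : 2 * (δ - S) * W ≤ -(η * W) := by
    rcases hW.eq_or_lt with rfl | hpos
    · simp
    · nlinarith [hbS hpos]
  have hconst : (δ - S) ^ 2 ≤ (|δ| + B) ^ 2 := by
    refine sq_le_sq' ?_ ?_ <;>
      linarith [abs_le.1 hSB, neg_abs_le δ, le_abs_self δ]
  nlinarith

def serviceRate {I J : Type*} [Fintype J] [DecidableEq I] (buf : J → I) (u β : J → ℝ) (i : I) :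
    ℝ :=
  ∑ j with buf j = i, u j * β j

/-- `min {β_j : k_j = k}`; for a processor without activities this is `sInf ∅ = 0`. -/
noncomputable def guaranteedRate {J K : Type*} (kOf : J → K) (β : J → ℝ) (k : K) : ℝ :=
  sInf {x : ℝ | ∃ j, kOf j = k ∧ x = β j}

lemma guaranteedRate_le {J K : Type*} [Finite J] (kOf : J → K) (β : J → ℝ) (j : J) :
    guaranteedRate kOf β (kOf j) ≤ β j :=
  csInf_le ((Set.finite_range β).subset (by rintro _ ⟨ℓ, -, rfl⟩; exact ⟨ℓ, rfl⟩)).bddBelow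
    ⟨j, rfl, rfl⟩

lemma guaranteedRate_le_sum_of_saturated {J K : Type*} [Fintype J] [DecidableEq K] (kOf : J → K)
    (β : J → ℝ) {u : J → ℝ} (hu : ∀ j, 0 ≤ u j) {k : K} (hk : ∑ j with kOf j = k, u j = 1) :
    guaranteedRate kOf β k ≤ ∑ j with kOf j = k, u j * β j :=
  calc guaranteedRate kOf β k = ∑ j with kOf j = k, u j * guaranteedRate kOf β k := by
        rw [← sum_mul, hk, one_mul]
    _ ≤ ∑ j with kOf j = k, u j * β j := by
        refine sum_le_sum fun j hj => mul_le_mul_of_nonneg_left ?_ (hu j)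
        rw [← (mem_filter.1 hj).2]
        exact guaranteedRate_le kOf β j

lemma sum_serviceRate_eq {I J : Type*} [Fintype J] [DecidableEq I] (buf : J → I) (u β : J → ℝ)
    (s : Finset I) :
    ∑ i ∈ s, serviceRate buf u β i = ∑ j with buf j ∈ s, u j * β j :=
  sum_fiberwise_eq_sum_filter _ _ _ _

lemma abs_sum_serviceRate_le {I J : Type*} [Fintype J] [DecidableEq I] (buf : J → I) (β : J → ℝ)
    {u : J → ℝ} (hu : ∀ j, 0 ≤ u j ∧ u j ≤ 1) (s : Finset I) :
    |∑ i ∈ s, serviceRate buf u β i| ≤ ∑ j, |β j| := by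
  rw [sum_serviceRate_eq]
  calc |∑ j with buf j ∈ s, u j * β j| ≤ ∑ j with buf j ∈ s, |u j * β j| := abs_sum_le_sum_abs _ _
    _ ≤ ∑ j with buf j ∈ s, |β j| := by
        refine sum_le_sum fun j _ => ?_
        rw [abs_mul, abs_of_nonneg (hu j).1]
        exact mul_le_of_le_one_left (abs_nonneg _) (hu j).2
    _ ≤ ∑ j, |β j| := sum_le_sum_of_subset_of_nonneg (filter_subset _ _) fun _ _ _ => abs_nonneg _

lemma sum_guaranteedRate_le_sum_serviceRate {I J K H : Type*} [Fintype I] [Fintype J] [Fintype K]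
    [DecidableEq I] [DecidableEq K] [DecidableEq H] {buf : J → I} {kOf : J → K} {compI : I → H}
    {compK : K → H} (hcomp : ∀ j, compI (buf j) = compK (kOf j))
    (hbip : ∀ i k, compI i = compK k → ∃ j, buf j = i ∧ kOf j = k) (β : J → ℝ)
    {w : I → ℝ} {u : J → ℝ} (hu : ∀ j, 0 ≤ u j)
    (hmax : ∀ j, w (buf j) = 0 ∨ ∑ ℓ with kOf ℓ = kOf j, u ℓ = 1) {h : H}
    (hW : ∑ i with compI i = h, w i ≠ 0) :
    ∑ k with compK k = h, guaranteedRate kOf β k ≤ ∑ i with compI i = h, serviceRate buf u β i := by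
  obtain ⟨i₀, hi₀h, hi₀⟩ := exists_ne_zero_of_sum_ne_zero hW
  have hsat : ∀ k, compK k = h → ∑ ℓ with kOf ℓ = k, u ℓ = 1 := by
    intro k hk
    obtain ⟨j, rfl, rfl⟩ := hbip i₀ k ((mem_filter.1 hi₀h).2.trans hk.symm)
    exact (hmax j).resolve_left hi₀
  have hregroup : ∑ i with compI i = h, serviceRate buf u β i
      = ∑ k with compK k = h, ∑ j with kOf j = k, u j * β j := by
    rw [sum_serviceRate_eq, sum_fiberwise_eq_sum_filter]
    congr 1
    ext j
    simp [hcomp j]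
  rw [hregroup]
  exact sum_le_sum fun k hk =>
    guaranteedRate_le_sum_of_saturated kOf β hu (hsat k (mem_filter.1 hk).2)

theorem parallel_server_local_lyapunov_general
    {I J K H : Type*} [Fintype I] [Fintype J] [Fintype K] [Fintype H]
    [DecidableEq I] [DecidableEq K] [DecidableEq H]
    (buf : J → I) (kOf : J → K) (β : J → ℝ)
    (compI : I → H) (compK : K → H)
    (hcomp : ∀ j, compI (buf j) = compK (kOf j))
    (hbip : ∀ i k, compI i = compK k → ∃ j, buf j = i ∧ kOf j = k)
    (ρ m : I → ℝ)
    (ε : ℝ)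
    (hload : ∀ h : H,
      ∑ i ∈ Finset.univ.filter (fun i => compI i = h), (ρ i + ε * m i)
        < ∑ k ∈ Finset.univ.filter (fun k => compK k = h),
            sInf {x : ℝ | ∃ j, kOf j = k ∧ x = β j}) :
    ∃ η > (0:ℝ), ∃ C ≥ (0:ℝ), ∀ (w : I → ℝ) (u : J → ℝ),
      (∀ i, 0 ≤ w i) →
      (∀ j, u j = 0 ∨ u j = 1) →
      (∀ k : K, ∑ j ∈ Finset.univ.filter (fun j => kOf j = k), u j ≤ 1) →
      (∀ j : J, w (buf j) = 0 ∨
        ∑ ℓ ∈ Finset.univ.filter (fun ℓ => kOf ℓ = kOf j), u ℓ = 1) →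
      ∑ h : H, (∑ i ∈ Finset.univ.filter (fun i => compI i = h),
          (w i + ρ i + ε * m i - ∑ j ∈ Finset.univ.filter (fun j => buf j = i), u j * β j)) ^ 2
        ≤ (∑ h : H, (∑ i ∈ Finset.univ.filter (fun i => compI i = h), w i) ^ 2)
            - η * ∑ i : I, w i + C := by
  set δ : H → ℝ := fun h => ∑ i with compI i = h, (ρ i + ε * m i)
  obtain ⟨η, hη, hηδ⟩ := exists_pos_le_of_forall_pos
    (f := fun h => 2 * (∑ k with compK k = h, guaranteedRate kOf β k - δ h))
    fun h => by simpa [guaranteedRate] using hload h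
  refine ⟨η, hη, ∑ h, (|δ h| + ∑ j, |β j|) ^ 2, by positivity, ?_⟩
  intro w u hw hu01 _ hmax
  have hu : ∀ j, 0 ≤ u j ∧ u j ≤ 1 := fun j => by rcases hu01 j with h | h <;> simp [h]
  set W : H → ℝ := fun h => ∑ i with compI i = h, w i
  set S : H → ℝ := fun h => ∑ i with compI i = h, serviceRate buf u β i
  have hsplit : ∀ h, ∑ i with compI i = h, (w i + ρ i + ε * m i - serviceRate buf u β i)
      = W h + δ h - S h := fun h => by
    simp only [W, δ, S, sum_sub_distrib, sum_add_distrib]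
    ring
  have hcomponent : ∀ h, (W h + δ h - S h) ^ 2 ≤ W h ^ 2 - η * W h + (|δ h| + ∑ j, |β j|) ^ 2 :=
    fun h => sq_add_sub_le (sum_nonneg fun i _ => hw i) (abs_sum_serviceRate_le buf β hu _)
      (fun hW => sum_guaranteedRate_le_sum_serviceRate hcomp hbip β (fun j => (hu j).1) hmax
        hW.ne') (hηδ h)
  calc ∑ h, (∑ i with compI i = h, (w i + ρ i + ε * m i - serviceRate buf u β i)) ^ 2
      = ∑ h, (W h + δ h - S h) ^ 2 := sum_congr rfl fun h _ => by rw [hsplit]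
    _ ≤ ∑ h, (W h ^ 2 - η * W h + (|δ h| + ∑ j, |β j|) ^ 2) := sum_le_sum fun h _ => hcomponent h
    _ = ∑ h, W h ^ 2 - η * ∑ i, w i + ∑ h, (|δ h| + ∑ j, |β j|) ^ 2 := by
        rw [sum_add_distrib, sum_sub_distrib, ← mul_sum, sum_fiberwise]

/-- The quadratic function `L(x) = ∑_h (∑_{i ∈ I^{(h)}} x_i)²` is a local Lyapunov
function with slack `ε` for parallel server networks satisfying Assumptions A1 and A2,
provided `ρ^{(h)} + ε m^{(h)} < β̂^{(h)}` for every component `h`. -/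
theorem parallel_server_local_lyapunov
    {I J K H : Type*} [Fintype I] [Fintype J] [Fintype K] [Fintype H]
    [Nonempty I] [Nonempty J] [Nonempty K]
    [DecidableEq I] [DecidableEq K] [DecidableEq H]
    (buf : J → I) (kOf : J → K) (β : J → ℝ) (hβ : ∀ j, 0 < β j)
    (compI : I → H) (compK : K → H)
    (hIsurj : Function.Surjective compI) (hKsurj : Function.Surjective compK)
    (hcomp : ∀ j, compI (buf j) = compK (kOf j))
    (hbip : ∀ i k, compI i = compK k → ∃ j, buf j = i ∧ kOf j = k)
    (ρ m : I → ℝ) (hρ : ∀ i, 0 ≤ ρ i) (hm : ∀ i, 0 < m i)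
    (ε : ℝ) (hε : 0 ≤ ε)
    (hload : ∀ h : H,
      ∑ i ∈ Finset.univ.filter (fun i => compI i = h), (ρ i + ε * m i)
        < ∑ k ∈ Finset.univ.filter (fun k => compK k = h),
            sInf {x : ℝ | ∃ j, kOf j = k ∧ x = β j}) :
    ∃ η > (0:ℝ), ∃ C ≥ (0:ℝ), ∀ (w : I → ℝ) (u : J → ℝ),
      (∀ i, 0 ≤ w i) →
      (∀ j, u j = 0 ∨ u j = 1) →
      (∀ k : K, ∑ j ∈ Finset.univ.filter (fun j => kOf j = k), u j ≤ 1) →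
      (∀ j : J, w (buf j) = 0 ∨
        ∑ ℓ ∈ Finset.univ.filter (fun ℓ => kOf ℓ = kOf j), u ℓ = 1) →
      ∑ h : H, (∑ i ∈ Finset.univ.filter (fun i => compI i = h),
          (w i + ρ i + ε * m i - ∑ j ∈ Finset.univ.filter (fun j => buf j = i), u j * β j)) ^ 2
        ≤ (∑ h : H, (∑ i ∈ Finset.univ.filter (fun i => compI i = h), w i) ^ 2)
            - η * ∑ i : I, w i + C :=
  parallel_server_local_lyapunov_general buf kOf β compI compK hcomp hbip ρ m ε hload
end

section
/- Consider a stochastic processing network structure satisfying Assumption B1 with unit service rates (β_{j_i} = 1 for all i ∈ I), and define L(x) = ∑_{i ∈ I} ∑_{k ∈ K_i} ∑_{ℓ ∈ I : k ∈ K_ℓ} x_i x_ℓ for x ∈ ℝ^I. Let ρ ∈ ℝ_{≥0}^I, m ∈ ℝ_{>0}^I and ε ≥ 0, set ν_i = ρ_i + ε m_i and ν^{(k)} = ∑_{i ∈ I : k ∈ K_i} ν_i. If ν^{(k)} < 1/(max_{i ∈ I} |K_i|) for every processor k ∈ K, then there exist constants η > 0 and C ≥ 0 such that for every w ∈ ℝ_{≥0}^I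 and every scheduling vector u maximal with respect to w: L(w + ρ + εm − s(u)) ≤ L(w) − η ∑_{i ∈ I} w_i + C, where s(u) ∈ ℝ^I is given by s_i(u) = u_{j_i}. -/
/-!
With the processor loads `x^{(k)} = ∑_{i : k ∈ K_i} x_i`, the function is a sum of squares,
`L(x) = ∑_k (x^{(k)})²`. Expanding `L(w + d)` with `d = ν - s(u)` leaves the cross term
`2 ∑_i w_i ∑_{k ∈ K_i} d^{(k)}` and the bounded term `∑_k (d^{(k)})²`. If `w_i > 0`, maximality
saturates some processor of `K_i`, so `∑_{k ∈ K_i} d^{(k)} ≤ |K_i| max_k ν^{(k)} - 1`, which the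
load condition makes uniformly negative.
-/

open Finset

namespace ProcessingNetwork

variable {I K : Type*} [Fintype I] [DecidableEq K] (A : I → Finset K)

/-- `load A x k` is the paper's `x^{(k)}` for the processor sets `K_i = A i`. -/
def load (x : I → ℝ) (k : K) : ℝ :=
  ∑ i ∈ univ.filter (fun i => k ∈ A i), x i

def lyapunov (x : I → ℝ) : ℝ :=
  ∑ i, ∑ k ∈ A i, ∑ ℓ ∈ univ.filter (fun ℓ => k ∈ A ℓ), x i * x ℓ

lemma load_comp_equiv {J : Type*} [Fintype J] (B : J → Finset K) (e : I ≃ J) (x : J → ℝ)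
    (k : K) : load (B ∘ e) (x ∘ e) k = load B x k := by
  simp only [load, sum_filter, Function.comp_apply]
  exact e.sum_comp fun j => if k ∈ B j then x j else 0

variable [Fintype K]

lemma sum_load_mul (x : I → ℝ) (f : K → ℝ) :
    ∑ k, load A x k * f k = ∑ i, x i * ∑ k ∈ A i, f k := by
  simp only [load, sum_mul, mul_sum]
  exact sum_comm' fun k i => by simp

lemma lyapunov_eq_sum_load_sq (x : I → ℝ) : lyapunov A x = ∑ k, load A x k ^ 2 := by
  simp only [sq, sum_load_mul]
  simp only [load, mul_sum]
  rfl

lemma lyapunov_drift_le (w ν s : I → ℝ) (c : ℝ) (hw : ∀ i, 0 ≤ w i)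
    (hν : ∀ k, 0 ≤ load A ν k) (hνc : ∀ i, ∑ k ∈ A i, load A ν k ≤ c)
    (hs₀ : ∀ k, 0 ≤ load A s k) (hs₁ : ∀ k, load A s k ≤ 1)
    (hmax : ∀ i, w i = 0 ∨ ∃ k ∈ A i, load A s k = 1) :
    lyapunov A (fun i => w i + ν i - s i)
      ≤ lyapunov A w - 2 * (1 - c) * ∑ i, w i + (∑ k, load A ν k ^ 2 + Fintype.card K) := by
  set d : K → ℝ := fun k => load A ν k - load A s k
  have hload : ∀ k, load A (fun i => w i + ν i - s i) k = load A w k + d k := fun k => by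
    simp only [d, load, sum_add_distrib, sum_sub_distrib]
    ring
  have hexpand : lyapunov A (fun i => w i + ν i - s i)
      = lyapunov A w + 2 * ∑ k, load A w k * d k + ∑ k, d k ^ 2 := by
    simp only [lyapunov_eq_sum_load_sq, hload, mul_sum, ← sum_add_distrib]
    exact sum_congr rfl fun k _ => by ring
  have hcross_buffer : ∀ i, w i * ∑ k ∈ A i, d k ≤ w i * (c - 1) := fun i => by
    rcases hmax i with hwi | ⟨k₀, hk₀, hsat⟩
    · simp [hwi]
    refine mul_le_mul_of_nonneg_left ?_ (hw i)
    have hsaturated : 1 ≤ ∑ k ∈ A i, load A s k :=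
      hsat ▸ single_le_sum (fun k _ => hs₀ k) hk₀
    simp only [d, sum_sub_distrib]
    linarith [hνc i]
  have hcross : ∑ k, load A w k * d k ≤ (c - 1) * ∑ i, w i := by
    rw [sum_load_mul, mul_comm, sum_mul]
    exact sum_le_sum fun i _ => hcross_buffer i
  have hsquare : ∑ k, d k ^ 2 ≤ ∑ k, load A ν k ^ 2 + Fintype.card K := by
    rw [Fintype.card_eq_sum_ones, Nat.cast_sum, ← sum_add_distrib]
    refine sum_le_sum fun k _ => ?_
    simp only [d, Nat.cast_one]
    nlinarith [hν k, hs₀ k, hs₁ k]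
  linarith

end ProcessingNetwork

open ProcessingNetwork

theorem communication_network_local_lyapunov_general
    {I J K : Type*} [Fintype I] [Fintype J] [Fintype K]
    [Nonempty K]
    [DecidableEq K]
    (buf : J → I) (procs : J → Finset K)
    (jOf : I → J) (hB1a : ∀ i, buf (jOf i) = i) (hB1b : ∀ j, jOf (buf j) = j)
    (ρ m : I → ℝ) (hρ : ∀ i, 0 ≤ ρ i) (hm : ∀ i, 0 < m i)
    (ε : ℝ) (hε : 0 ≤ ε)
    (hload : ∀ k : K,
      ∑ i ∈ Finset.univ.filter (fun i : I => k ∈ procs (jOf i)), (ρ i + ε * m i)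
        < 1 / ((Finset.univ.sup fun i : I => (procs (jOf i)).card : ℕ) : ℝ)) :
    ∃ η > (0:ℝ), ∃ C ≥ (0:ℝ), ∀ (w : I → ℝ) (u : J → ℝ),
      (∀ i, 0 ≤ w i) →
      (∀ j, u j = 0 ∨ u j = 1) →
      (∀ k : K, ∑ j ∈ Finset.univ.filter (fun j => k ∈ procs j), u j ≤ 1) →
      (∀ j : J, w (buf j) = 0 ∨ ∃ k ∈ procs j,
        ∑ ℓ ∈ Finset.univ.filter (fun ℓ => k ∈ procs ℓ), u ℓ = 1) →
      ∑ i : I, ∑ k ∈ procs (jOf i),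
          ∑ ℓ ∈ Finset.univ.filter (fun ℓ : I => k ∈ procs (jOf ℓ)),
            (w i + ρ i + ε * m i - u (jOf i)) * (w ℓ + ρ ℓ + ε * m ℓ - u (jOf ℓ))
        ≤ (∑ i : I, ∑ k ∈ procs (jOf i),
            ∑ ℓ ∈ Finset.univ.filter (fun ℓ : I => k ∈ procs (jOf ℓ)), w i * w ℓ)
            - η * ∑ i : I, w i + C := by
  set A : I → Finset K := fun i => procs (jOf i)
  set ν : I → ℝ := fun i => ρ i + ε * m i
  set M : ℕ := univ.sup fun i => (A i).card
  have hν : ∀ k, 0 ≤ load A ν k := fun k =>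
    sum_nonneg fun i _ => add_nonneg (hρ i) (mul_nonneg hε (hm i).le)
  obtain ⟨k₀, hk₀⟩ := Finite.exists_max (load A ν)
  have hMν : M * load A ν k₀ < 1 := by
    rcases (Nat.cast_nonneg (α := ℝ) M).eq_or_lt with hM | hM
    · simp [← hM]
    · exact (lt_div_iff₀' hM).1 (hload k₀)
  have hνc : ∀ i, ∑ k ∈ A i, load A ν k ≤ M * load A ν k₀ := fun i => calc
    ∑ k ∈ A i, load A ν k ≤ (A i).card * load A ν k₀ := by
      simpa using sum_le_card_nsmul (A i) _ _ fun k _ => hk₀ k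
    _ ≤ M * load A ν k₀ := by
      gcongr
      · exact hν k₀
      · exact le_sup (f := fun i => (A i).card) (mem_univ i)
  refine ⟨2 * (1 - M * load A ν k₀), by linarith, ∑ k, load A ν k ^ 2 + Fintype.card K,
    by positivity, fun w u hw hu hcap hmax => ?_⟩
  have hload_u (k : K) : load A (u ∘ jOf) k = load procs u k :=
    load_comp_equiv procs ⟨jOf, buf, hB1a, hB1b⟩ u k
  have hu₀ (j : J) : 0 ≤ u j := by rcases hu j with h | h <;> simp [h]
  have hdrift := lyapunov_drift_le A w ν (u ∘ jOf) _ hw hν hνc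
    (fun k => (hload_u k).symm ▸ sum_nonneg fun j _ => hu₀ j)
    (fun k => (hload_u k).trans_le (hcap k))
    (fun i => (hmax (jOf i)).imp (fun h => hB1a i ▸ h)
      fun ⟨k, hk, hsat⟩ => ⟨k, hk, (hload_u k).trans hsat⟩)
  simpa only [lyapunov, Function.comp_apply, ν, add_assoc] using hdrift

/-- The quadratic function `L(x) = ∑_i ∑_{k ∈ K_i} ∑_{ℓ : k ∈ K_ℓ} x_i x_ℓ` is a local
Lyapunov function with slack `ε` for synchronized communication networks satisfying
Assumption B1 with unit rates, provided `ν^{(k)} < 1 / max_i |K_i|` for all processors. -/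
theorem communication_network_local_lyapunov
    {I J K : Type*} [Fintype I] [Fintype J] [Fintype K]
    [Nonempty I] [Nonempty J] [Nonempty K]
    [DecidableEq I] [DecidableEq J] [DecidableEq K]
    (buf : J → I) (procs : J → Finset K) (hprocs : ∀ j, (procs j).Nonempty)
    (β : J → ℝ) (hβ : ∀ j, 0 < β j)
    (jOf : I → J) (hB1a : ∀ i, buf (jOf i) = i) (hB1b : ∀ j, jOf (buf j) = j)
    (hunit : ∀ i : I, β (jOf i) = 1)
    (ρ m : I → ℝ) (hρ : ∀ i, 0 ≤ ρ i) (hm : ∀ i, 0 < m i)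
    (ε : ℝ) (hε : 0 ≤ ε)
    (hload : ∀ k : K,
      ∑ i ∈ Finset.univ.filter (fun i : I => k ∈ procs (jOf i)), (ρ i + ε * m i)
        < 1 / ((Finset.univ.sup fun i : I => (procs (jOf i)).card : ℕ) : ℝ)) :
    ∃ η > (0:ℝ), ∃ C ≥ (0:ℝ), ∀ (w : I → ℝ) (u : J → ℝ),
      (∀ i, 0 ≤ w i) →
      (∀ j, u j = 0 ∨ u j = 1) →
      (∀ k : K, ∑ j ∈ Finset.univ.filter (fun j => k ∈ procs j), u j ≤ 1) →
      (∀ j : J, w (buf j) = 0 ∨ ∃ k ∈ procs j,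
        ∑ ℓ ∈ Finset.univ.filter (fun ℓ => k ∈ procs ℓ), u ℓ = 1) →
      ∑ i : I, ∑ k ∈ procs (jOf i),
          ∑ ℓ ∈ Finset.univ.filter (fun ℓ : I => k ∈ procs (jOf ℓ)),
            (w i + ρ i + ε * m i - u (jOf i)) * (w ℓ + ρ ℓ + ε * m ℓ - u (jOf ℓ))
        ≤ (∑ i : I, ∑ k ∈ procs (jOf i),
            ∑ ℓ ∈ Finset.univ.filter (fun ℓ : I => k ∈ procs (jOf ℓ)), w i * w ℓ)
            - η * ∑ i : I, w i + C :=
  communication_network_local_lyapunov_general buf procs jOf hB1a hB1b ρ m hρ hm ε hε hload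
end

section
/- Let m₁, m₂, m₃, m₄ > 0 satisfy m₁ + m₄ < 1 and m₂ + m₃ < 1, and let 0 ≤ ε < min((1 − m₁ − m₄)/(m₁ + m₄), (1 − m₂ − m₃)/(m₂ + m₃)). Define L : ℝ⁴ → ℝ by L(x) = (x₁ + x₄)² + (x₂ + x₃)². Call a pair (w, u) with w ∈ ℝ_{≥0}⁴ and u ∈ {0,1}⁴ Rybko–Stolyar-maximal if u₁ + u₄ ≤ 1, u₂ + u₃ ≤ 1, u₁ + u₄ = 1 whenever w₁ > 0 or w₄ > 0, and u₂ + u₃ = 1 whenever w₂ > 0 or w₃ > 0. Then there exist constants η > 0 and C ≥ 0 such that for every Rybko–Stolyar-maximal pair (w, u): L(w + (1 + ε)m − u) ≤ L(w) − η(w₁ + w₂ + w₃ + w₄) + C, where m = (m₁, m₂, m₃, m₄) and u is regarded as a vector in ℝ⁴. -/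
/-!
Each processor is handled separately. If its workload `A` is positive, maximality makes it
serve at rate `1`, so its workload changes by `ρ - 1 < 0` and `(A + ρ - 1)² = A² - 2(1 - ρ)A +
(1 - ρ)²`; if `A = 0` the square is at most `1`. The slack condition on `ε` is exactly that the
inflated loads `ρ = (1 + ε)(m₁ + m₄)` and `(1 + ε)(m₂ + m₃)` stay below `1`, so both processors
have drift at most `-2 min(1 - ρ) · A + 1`.
-/

lemma sq_add_sub_le_of_busy {A ρ s : ℝ} (hA : 0 ≤ A) (hρ0 : 0 ≤ ρ) (hρ1 : ρ ≤ 1)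
    (hs0 : 0 ≤ s) (hs1 : s ≤ 1) (hbusy : 0 < A → s = 1) :
    (A + ρ - s) ^ 2 ≤ A ^ 2 - 2 * (1 - ρ) * A + 1 := by
  rcases hA.eq_or_lt with rfl | hA
  · nlinarith
  · rw [hbusy hA]
    nlinarith

lemma processor_drift_le {wi wj ui uj ρi ρj : ℝ} (hwi : 0 ≤ wi) (hwj : 0 ≤ wj)
    (hui : 0 ≤ ui) (huj : 0 ≤ uj) (hu : ui + uj ≤ 1)
    (hbusy : (0 < wi ∨ 0 < wj) → ui + uj = 1) (hρ0 : 0 ≤ ρi + ρj) (hρ1 : ρi + ρj ≤ 1) :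
    ((wi + ρi - ui) + (wj + ρj - uj)) ^ 2
      ≤ (wi + wj) ^ 2 - 2 * (1 - (ρi + ρj)) * (wi + wj) + 1 := by
  have hbusy' : 0 < wi + wj → ui + uj = 1 := fun hpos =>
    hbusy (by by_contra! h; linarith [h.1, h.2])
  have := sq_add_sub_le_of_busy (add_nonneg hwi hwj) hρ0 hρ1 (add_nonneg hui huj) hu hbusy'
  calc ((wi + ρi - ui) + (wj + ρj - uj)) ^ 2 = ((wi + wj) + (ρi + ρj) - (ui + uj)) ^ 2 := by
        ring
    _ ≤ _ := this

-- Positivity of `S` comes for free: `(1 - S) / S ≤ 0 ≤ ε` whenever `S ≤ 0`.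
lemma pos_and_inflated_lt_one {S ε : ℝ} (hε0 : 0 ≤ ε) (hε : ε < (1 - S) / S) :
    0 < S ∧ (1 + ε) * S < 1 := by
  have hS : 0 < S := by
    by_contra! hS
    linarith [div_nonpos_of_nonneg_of_nonpos (by linarith : (0 : ℝ) ≤ 1 - S) hS]
  refine ⟨hS, ?_⟩
  have := (lt_div_iff₀ hS).mp hε
  linarith

-- Buffers are indexed `0, 1, 2, 3` instead of `1, 2, 3, 4`.
theorem rybko_stolyar_local_lyapunov_general
    (m : Fin 4 → ℝ)
    (ε : ℝ) (hε0 : 0 ≤ ε)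
    (hε : ε < min ((1 - m 0 - m 3) / (m 0 + m 3)) ((1 - m 1 - m 2) / (m 1 + m 2))) :
    ∃ η > (0:ℝ), ∃ C ≥ (0:ℝ), ∀ w u : Fin 4 → ℝ,
      (∀ i, 0 ≤ w i) → (∀ i, u i = 0 ∨ u i = 1) →
      u 0 + u 3 ≤ 1 → u 1 + u 2 ≤ 1 →
      ((0 < w 0 ∨ 0 < w 3) → u 0 + u 3 = 1) →
      ((0 < w 1 ∨ 0 < w 2) → u 1 + u 2 = 1) →
      ((w 0 + (1 + ε) * m 0 - u 0) + (w 3 + (1 + ε) * m 3 - u 3)) ^ 2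
        + ((w 1 + (1 + ε) * m 1 - u 1) + (w 2 + (1 + ε) * m 2 - u 2)) ^ 2
      ≤ (w 0 + w 3) ^ 2 + (w 1 + w 2) ^ 2 - η * (w 0 + w 1 + w 2 + w 3) + C := by
  rw [sub_sub, sub_sub] at hε
  obtain ⟨hS₁, hρ₁⟩ := pos_and_inflated_lt_one hε0 (hε.trans_le (min_le_left _ _))
  obtain ⟨hS₂, hρ₂⟩ := pos_and_inflated_lt_one hε0 (hε.trans_le (min_le_right _ _))
  set ρ₁ := (1 + ε) * (m 0 + m 3)
  set ρ₂ := (1 + ε) * (m 1 + m 2)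
  set δ := min (1 - ρ₁) (1 - ρ₂)
  refine ⟨2 * δ, by simp [δ, hρ₁, hρ₂], 2, by norm_num, ?_⟩
  intro w u hw hu hu₁ hu₂ hbusy₁ hbusy₂
  have hu_nonneg : ∀ i, 0 ≤ u i := fun i => by rcases hu i with h | h <;> simp [h]
  have hρ₁' : (1 + ε) * m 0 + (1 + ε) * m 3 = ρ₁ := (mul_add _ _ _).symm
  have hρ₂' : (1 + ε) * m 1 + (1 + ε) * m 2 = ρ₂ := (mul_add _ _ _).symm
  have drift₁ := processor_drift_le (hw 0) (hw 3) (hu_nonneg 0) (hu_nonneg 3) hu₁ hbusy₁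
    (hρ₁' ▸ (mul_pos (by linarith) hS₁).le) (hρ₁' ▸ hρ₁.le)
  have drift₂ := processor_drift_le (hw 1) (hw 2) (hu_nonneg 1) (hu_nonneg 2) hu₂ hbusy₂
    (hρ₂' ▸ (mul_pos (by linarith) hS₂).le) (hρ₂' ▸ hρ₂.le)
  rw [hρ₁'] at drift₁
  rw [hρ₂'] at drift₂
  have hδ₁ : δ * (w 0 + w 3) ≤ (1 - ρ₁) * (w 0 + w 3) :=
    mul_le_mul_of_nonneg_right (min_le_left _ _) (add_nonneg (hw 0) (hw 3))
  have hδ₂ : δ * (w 1 + w 2) ≤ (1 - ρ₂) * (w 1 + w 2) :=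
    mul_le_mul_of_nonneg_right (min_le_right _ _) (add_nonneg (hw 1) (hw 2))
  linarith

/-- Local Lyapunov function for the Rybko–Stolyar network:
`L(x) = (x₁ + x₄)² + (x₂ + x₃)²` satisfies the local Lyapunov drift condition with
slack `ε` under the stability conditions `m₁ + m₄ < 1` and `m₂ + m₃ < 1`.
(Buffers are indexed `0,1,2,3` instead of `1,2,3,4`.) -/
theorem rybko_stolyar_local_lyapunov
    (m : Fin 4 → ℝ) (hm : ∀ i, 0 < m i)
    (h14 : m 0 + m 3 < 1) (h23 : m 1 + m 2 < 1)
    (ε : ℝ) (hε0 : 0 ≤ ε)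
    (hε : ε < min ((1 - m 0 - m 3) / (m 0 + m 3)) ((1 - m 1 - m 2) / (m 1 + m 2))) :
    ∃ η > (0:ℝ), ∃ C ≥ (0:ℝ), ∀ w u : Fin 4 → ℝ,
      (∀ i, 0 ≤ w i) → (∀ i, u i = 0 ∨ u i = 1) →
      u 0 + u 3 ≤ 1 → u 1 + u 2 ≤ 1 →
      ((0 < w 0 ∨ 0 < w 3) → u 0 + u 3 = 1) →
      ((0 < w 1 ∨ 0 < w 2) → u 1 + u 2 = 1) →
      ((w 0 + (1 + ε) * m 0 - u 0) + (w 3 + (1 + ε) * m 3 - u 3)) ^ 2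
        + ((w 1 + (1 + ε) * m 1 - u 1) + (w 2 + (1 + ε) * m 2 - u 2)) ^ 2
      ≤ (w 0 + w 3) ^ 2 + (w 1 + w 2) ^ 2 - η * (w 0 + w 1 + w 2 + w 3) + C :=
  rybko_stolyar_local_lyapunov_general m ε hε0 hε
end
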